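/- If π and π' are distinct partitions of n, then the sets of canonical plane matrices of types π and π' are disjoint: 𝒫_π ∩ 𝒫_{π'} = ∅. -/
import Mathlib


/- Common setup: canonical plane matrices (P. Daugulis, "A parametrization of
matrix conjugacy orbit sets as unions of affine planes"). -/

open Matrix Polynomial

noncomputable section

/-- `ℕ`-indexed entries of the generalized companion matrix `R_l(y₁,...,y_l)`:
subdiagonal entries `1`, last column given (via Vieta) by the coefficients of
`∏ (X - yᵢ)` (entry in row `k` of the last column is
`(−1)^{l+1−k}·e_{l+1−k}(y)`), all other entries `0`. -/
def genCompE (l : ℕ) (y : Fin l → ℂ) (i j : ℕ) : ℂ :=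
  if i < l ∧ j < l then
    (if i = j + 1 then 1
     else if j = l - 1 then -((∏ k, (X - C (y k))).coeff i)
     else 0)
  else 0

/-- The generalized companion matrix `R_l(y₁,...,y_l)`, i.e. the companion
matrix of `∏ (X - yᵢ)`. -/
def genComp (l : ℕ) (y : Fin l → ℂ) : Matrix (Fin l) (Fin l) ℂ :=
  Matrix.of fun i j => genCompE l y i j

/-- A partition of `n`, recorded by its stacks: `t` stacks, with strictly
decreasing positive distinct values `m 0 > m 1 > ... > m (t-1)` and positive
lengths `l j`, so that the partition consists of `l j` copies of `m j` and
`n = ∑ j, l j * m j`. -/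
structure StackPartition (n : ℕ) where
  t : ℕ
  m : Fin t → ℕ
  l : Fin t → ℕ
  m_pos : ∀ j, 0 < m j
  l_pos : ∀ j, 0 < l j
  m_strictAnti : ∀ i j : Fin t, i < j → m j < m i
  sum_eq : (∑ j, l j * m j) = n

namespace StackPartition

variable {n : ℕ} (P : StackPartition n)

/-- `m j` extended by `0` beyond the number of stacks (`0`-indexed), so
`mE 0 = m_1` and `mE t = m_{t+1} = 0` in the paper's notation. -/
def mE (j : ℕ) : ℕ := if h : j < P.t then P.m ⟨j, h⟩ else 0

/-- Row/column offset of the `j`-th diagonal block (`0`-indexed):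
`S j = ∑_{i<j} l i * m i`. -/
def S (j : ℕ) : ℕ := ∑ i : Fin P.t, if (i : ℕ) < j then P.l i * P.m i else 0

/-- `sE j = ∑_{i<j} l i`; the paper's `s_j` (for `1`-indexed `j`) is `sE j`. -/
def sE (j : ℕ) : ℕ := ∑ i : Fin P.t, if (i : ℕ) < j then P.l i else 0

/-- The multiset of addends of the partition. -/
def parts : Multiset ℕ := ∑ j : Fin P.t, Multiset.replicate (P.l j) (P.m j)

/-- Offsets for the direct sum `⊕_j (m_j - m_{j+1}) G_j`. -/
def T (k : ℕ) : ℕ :=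
  ∑ i : Fin P.t, if (i : ℕ) < k then (P.m i - P.mE ((i : ℕ) + 1)) * P.sE ((i : ℕ) + 1) else 0

end StackPartition

/-- Parameters `λ_{j,1},...,λ_{j,l_j}` for each stack `j`. -/
def Params {n : ℕ} (P : StackPartition n) := (j : Fin P.t) → Fin (P.l j) → ℂ

/-- `ℕ`-indexed entry of the canonical plane matrix of type `P` with
parameters `lam`: the `j`-th diagonal block (of size `l j * m j`, occupying
rows and columns `[S j, S (j+1))`) is `R_{l j}(lam j) ⊗ E_{m j}` (row index
`a` of the block encodes the pair `(a / m j, a % m j)`), the block directly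
below it occupies the first `m (j+1)` rows of block `j+1` and the last `m j`
columns of block `j` and equals `[O | E_{m (j+1)}]`, and all other entries
vanish. -/
def cpmEntry {n : ℕ} (P : StackPartition n) (lam : Params P) (r c : ℕ) : ℂ :=
  (∑ j : Fin P.t,
    if P.S j ≤ r ∧ r < P.S ((j : ℕ) + 1) ∧ P.S j ≤ c ∧ c < P.S ((j : ℕ) + 1)
        ∧ (r - P.S j) % P.m j = (c - P.S j) % P.m j then
      genCompE (P.l j) (lam j) ((r - P.S j) / P.m j) ((c - P.S j) / P.m j)
    else 0)
  +
  (∑ j : Fin P.t,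
    if P.S ((j : ℕ) + 1) ≤ r ∧ r < P.S ((j : ℕ) + 1) + P.mE ((j : ℕ) + 1)
        ∧ P.S ((j : ℕ) + 1) - P.m j ≤ c ∧ c < P.S ((j : ℕ) + 1)
        ∧ c - (P.S ((j : ℕ) + 1) - P.m j)
            = (P.m j - P.mE ((j : ℕ) + 1)) + (r - P.S ((j : ℕ) + 1)) then
      (1 : ℂ)
    else 0)

/-- The canonical plane matrix of type `P` with parameters `lam`. -/
def cpm {n : ℕ} (P : StackPartition n) (lam : Params P) : Matrix (Fin n) (Fin n) ℂ :=
  Matrix.of fun r c => cpmEntry P lam r c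

/-- The set `𝒫_π` of canonical plane matrices of type `P`. -/
def planeSet {n : ℕ} (P : StackPartition n) : Set (Matrix (Fin n) (Fin n) ℂ) :=
  { A | ∃ lam : Params P, A = cpm P lam }

/-- Similarity (conjugacy) of square complex matrices. -/
def MatrixSimilar {n : ℕ} (A B : Matrix (Fin n) (Fin n) ℂ) : Prop :=
  ∃ Q : Matrix (Fin n) (Fin n) ℂ, IsUnit Q.det ∧ A * Q = Q * B

/-- The `A`-cyclic subspace `ℂ[A]·v`, spanned by `v, Av, A²v, ...`. -/
def cyclicSpan {n : ℕ} (A : Matrix (Fin n) (Fin n) ℂ) (v : Fin n → ℂ) :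
    Submodule ℂ (Fin n → ℂ) :=
  Submodule.span ℂ (Set.range fun k : ℕ => (A ^ k) *ᵥ v)

/-- `ℕ`-indexed entry of the matrix
`G_j = ⊕_{i≤j} C(a_{i,0},...,a_{i,l_i−1}) + Σ_{i<j} E_{s_i+1,s_i}`
(`0`-indexed `j`; the `i`-th diagonal block is the companion matrix of
`∏_k (X - λ_{i,k})`, and the matrix units sit just below the lower-left
corners of the diagonal blocks). -/
def GEntry {n : ℕ} (P : StackPartition n) (lam : Params P) (j r c : ℕ) : ℂ :=
  (∑ i : Fin P.t,
    if (i : ℕ) ≤ j ∧ P.sE i ≤ r ∧ r < P.sE ((i : ℕ) + 1)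
        ∧ P.sE i ≤ c ∧ c < P.sE ((i : ℕ) + 1) then
      genCompE (P.l i) (lam i) (r - P.sE i) (c - P.sE i)
    else 0)
  +
  (∑ i : Fin P.t,
    if 1 ≤ (i : ℕ) ∧ (i : ℕ) ≤ j ∧ r = P.sE i ∧ c + 1 = P.sE i then (1 : ℂ) else 0)

/-- The `s_j × s_j` matrix `G_j` (`0`-indexed `j`, of size `sE (j+1)`). -/
def Gm {n : ℕ} (P : StackPartition n) (lam : Params P) (j : Fin P.t) :
    Matrix (Fin (P.sE ((j : ℕ) + 1))) (Fin (P.sE ((j : ℕ) + 1))) ℂ :=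
  Matrix.of fun r c => GEntry P lam j r c

/-- The multiset `[λ_{j,1},...,λ_{j,l_j}]` of stack `j`. -/
def stackMultiset {n : ℕ} (P : StackPartition n) (lam : Params P) (j : Fin P.t) :
    Multiset ℂ :=
  Multiset.map (lam j) Finset.univ.val

/-- `μ(z, j)`: multiplicity of `z` in the multiset `[λ_{j,1},...,λ_{j,l_j}]`. -/
def mu {n : ℕ} (P : StackPartition n) (lam : Params P) (z : ℂ) (j : Fin P.t) : ℕ :=
  (stackMultiset P lam j).count z

/-- The multiset of all parameters of stacks `0,...,j` (`0`-indexed), so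
`α(z, j) = (lamUpTo P lam j).count z`. -/
def lamUpTo {n : ℕ} (P : StackPartition n) (lam : Params P) (j : ℕ) : Multiset ℂ :=
  ∑ i : Fin P.t, if (i : ℕ) ≤ j then stackMultiset P lam i else 0

/-- Index type for the direct sum of one Jordan block per distinct element of a
multiset `s`, the block for `z` having size `s.count z`. -/
abbrev JordanIdx (s : Multiset ℂ) : Type := Σ z : s.toFinset, Fin (s.count z.val)

/-- The direct sum `⊕_z J_{s.count z}(z)` over the distinct elements `z` of the
multiset `s` (lower Jordan blocks: eigenvalue on the diagonal, ones on the
subdiagonal). -/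
def jordanOfMultiset (s : Multiset ℂ) : Matrix (JordanIdx s) (JordanIdx s) ℂ :=
  Matrix.of fun x y =>
    if x.1 = y.1 then
      (if (x.2 : ℕ) = (y.2 : ℕ) then x.1.val
       else if (x.2 : ℕ) = (y.2 : ℕ) + 1 then 1 else 0)
    else 0

/-- `0`-indexed Weyr characteristic: `weyr B z i = ω_{i+1}` where
`ω_k = dim ker (B - zI)^k − dim ker (B - zI)^{k-1}`. -/
def weyr {n : ℕ} (B : Matrix (Fin n) (Fin n) ℂ) (z : ℂ) (i : ℕ) : ℕ :=
  Module.finrank ℂ (LinearMap.ker ((B - z • 1).mulVecLin ^ (i + 1)))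
    - Module.finrank ℂ (LinearMap.ker ((B - z • 1).mulVecLin ^ i))

/-- `ℕ`-indexed entry of the block diagonal matrix `⊕_j (m_j - m_{j+1}) G_j`
(for each `j`, exactly `m j - m (j+1)` consecutive copies of `G_j`). -/
def dsEntry {n : ℕ} (P : StackPartition n) (lam : Params P) (r c : ℕ) : ℂ :=
  ∑ j : Fin P.t,
    if P.T j ≤ r ∧ r < P.T ((j : ℕ) + 1) ∧ P.T j ≤ c ∧ c < P.T ((j : ℕ) + 1)
        ∧ (r - P.T j) / P.sE ((j : ℕ) + 1) = (c - P.T j) / P.sE ((j : ℕ) + 1) then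
      GEntry P lam j ((r - P.T j) % P.sE ((j : ℕ) + 1)) ((c - P.T j) % P.sE ((j : ℕ) + 1))
    else 0

/-- Index type for `⊕_{j=1}^{t} (m_j - m_{j+1}) (⊕_z J_{α(z,j)}(z))`. -/
abbrev FullJordanIdx {n : ℕ} (P : StackPartition n) (lam : Params P) : Type :=
  Σ j : Fin P.t, Fin (P.m j - P.mE ((j : ℕ) + 1)) × JordanIdx (lamUpTo P lam (j : ℕ))

/-- The matrix `⊕_{j=1}^{t} (m_j - m_{j+1}) (⊕_z J_{α(z,j)}(z))`: for each `j`,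
`m j - m (j+1)` copies of the direct sum, over the distinct `z` with
`α(z,j) = μ(z,1) + ... + μ(z,j) > 0`, of the Jordan blocks `J_{α(z,j)}(z)`. -/
def fullJordan {n : ℕ} (P : StackPartition n) (lam : Params P) :
    Matrix (FullJordanIdx P lam) (FullJordanIdx P lam) ℂ :=
  Matrix.of fun x y =>
    if h : x.1 = y.1 then
      (fun y2 : Fin (P.m x.1 - P.mE ((x.1 : ℕ) + 1)) × JordanIdx (lamUpTo P lam (x.1 : ℕ)) =>
        if x.2.1 = y2.1 then jordanOfMultiset (lamUpTo P lam (x.1 : ℕ)) x.2.2 y2.2 else 0)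
      (cast (congrArg (fun j : Fin P.t =>
        Fin (P.m j - P.mE ((j : ℕ) + 1)) × JordanIdx (lamUpTo P lam (j : ℕ))) h.symm) y.2)
    else 0

end
section Aux

namespace StackPartition

variable {n : ℕ} (P : StackPartition n)

lemma S_zero : P.S 0 = 0 := by simp [S]

lemma S_of_le {j : ℕ} (hj : P.t ≤ j) : P.S j = n := by
  conv_rhs => rw [← P.sum_eq]
  unfold S
  refine Finset.sum_congr rfl fun i _ => ?_
  rw [if_pos (lt_of_lt_of_le i.isLt hj)]

lemma S_succ {j : ℕ} (hj : j < P.t) :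
    P.S (j + 1) = P.S j + P.l ⟨j, hj⟩ * P.m ⟨j, hj⟩ := by
  unfold S
  have : ∀ i : Fin P.t,
      (if (i : ℕ) < j + 1 then P.l i * P.m i else 0)
        = (if (i : ℕ) < j then P.l i * P.m i else 0)
          + (if i = ⟨j, hj⟩ then P.l i * P.m i else 0) := by
    intro i
    simp only [Fin.ext_iff]
    split_ifs <;> omega
  rw [Finset.sum_congr rfl fun i _ => this i, Finset.sum_add_distrib,
    Finset.sum_ite_eq' Finset.univ (⟨j, hj⟩ : Fin P.t), if_pos (Finset.mem_univ _)]

lemma S_mono : Monotone P.S := by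
  apply monotone_nat_of_le_succ
  intro j
  unfold S
  refine Finset.sum_le_sum fun i _ => ?_
  split_ifs <;> omega

lemma S_le (j : ℕ) : P.S j ≤ n := by
  calc P.S j ≤ P.S (j + P.t) := P.S_mono (Nat.le_add_right _ _)
  _ = n := P.S_of_le (Nat.le_add_left _ _)

lemma S_lt_succ {j : ℕ} (hj : j < P.t) : P.S j < P.S (j + 1) := by
  rw [P.S_succ hj]
  have := P.m_pos ⟨j, hj⟩
  have := P.l_pos ⟨j, hj⟩
  have : 0 < P.l ⟨j, hj⟩ * P.m ⟨j, hj⟩ := Nat.mul_pos ‹_› ‹_›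
  omega

lemma S_lt_n {j : ℕ} (hj : j < P.t) : P.S j < n :=
  lt_of_lt_of_le (P.S_lt_succ hj) (P.S_le _)

lemma lt_t_of_S_lt {j : ℕ} (h : P.S j < n) : j < P.t := by
  by_contra hc
  rw [P.S_of_le (le_of_not_gt hc)] at h
  omega

lemma exists_block {c : ℕ} (hc : c < n) :
    ∃ j, j < P.t ∧ P.S j ≤ c ∧ c < P.S (j + 1) := by
  have hex : ∃ i, c < P.S (i + 1) := ⟨P.t, by rw [P.S_of_le (by omega)]; exact hc⟩
  have h2 : c < P.S (Nat.find hex + 1) := Nat.find_spec hex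
  have h1 : P.S (Nat.find hex) ≤ c := by
    rcases Nat.eq_zero_or_pos (Nat.find hex) with h | h
    · rw [h, P.S_zero]; omega
    · have := Nat.find_min hex (show Nat.find hex - 1 < Nat.find hex by omega)
      have he : Nat.find hex - 1 + 1 = Nat.find hex := by omega
      rw [he] at this
      omega
  exact ⟨Nat.find hex, P.lt_t_of_S_lt (lt_of_le_of_lt h1 hc), h1, h2⟩

lemma block_unique {c j j' : ℕ} (h1 : P.S j ≤ c) (h2 : c < P.S (j + 1))
    (h1' : P.S j' ≤ c) (h2' : c < P.S (j' + 1)) : j = j' := by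
  by_contra hne
  rcases Nat.lt_or_ge j j' with h | h
  · have := P.S_mono (show j + 1 ≤ j' by omega)
    omega
  · have := P.S_mono (show j' + 1 ≤ j by omega)
    omega

lemma mE_lt {j : ℕ} (hj : j < P.t) : P.mE (j + 1) < P.m ⟨j, hj⟩ := by
  unfold mE
  split
  · exact P.m_strictAnti ⟨j, hj⟩ ⟨j + 1, ‹_›⟩ (by simp [Fin.lt_def])
  · exact P.m_pos _

lemma mE_pos_iff (k : ℕ) : 0 < P.mE k ↔ k < P.t := by
  rcases Nat.lt_or_ge k P.t with h | h
  · unfold mE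
    rw [dif_pos h]
    exact iff_of_true (P.m_pos _) h
  · unfold mE
    rw [dif_neg (by omega)]
    exact iff_of_false (by omega) (by omega)

lemma S_succ_add_mE_le {j : ℕ} (hj : j < P.t) : P.S (j + 1) + P.mE (j + 1) ≤ n := by
  by_cases h : j + 1 < P.t
  · have h1 : P.S (j + 2) ≤ n := P.S_le _
    rw [P.S_succ h] at h1
    have h2 : P.m ⟨j + 1, h⟩ ≤ P.l ⟨j + 1, h⟩ * P.m ⟨j + 1, h⟩ :=
      Nat.le_mul_of_pos_left _ (P.l_pos _)
    unfold mE
    rw [dif_pos h]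
    omega
  · unfold mE
    rw [dif_neg h]
    simpa using P.S_le (j + 1)

/-- The lam-independent subdiagonal pattern: for a column `c` lying in block
`j`, the offset `r - c` of the unique potentially nonzero entry strictly below
the diagonal in column `c` (or `0` if there is none). -/
def gfun (c : ℕ) : ℕ :=
  ∑ j : Fin P.t,
    if P.S (j : ℕ) ≤ c ∧ c < P.S ((j : ℕ) + 1) then
      (if c + P.m j < P.S ((j : ℕ) + 1) then P.m j
       else if P.S ((j : ℕ) + 1) ≤ c + P.mE ((j : ℕ) + 1) then P.mE ((j : ℕ) + 1)
       else 0)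
    else 0

lemma gfun_block {c j : ℕ} (hj : j < P.t) (h1 : P.S j ≤ c) (h2 : c < P.S (j + 1)) :
    P.gfun c = if c + P.m ⟨j, hj⟩ < P.S (j + 1) then P.m ⟨j, hj⟩
      else if P.S (j + 1) ≤ c + P.mE (j + 1) then P.mE (j + 1) else 0 := by
  unfold gfun
  rw [Finset.sum_eq_single_of_mem (⟨j, hj⟩ : Fin P.t) (Finset.mem_univ _)]
  · exact if_pos ⟨h1, h2⟩
  · intro i _ hne
    refine if_neg fun hcond => hne (Fin.ext ?_)
    exact P.block_unique hcond.1 hcond.2 h1 h2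

end StackPartition

end Aux
section Aux2

namespace StackPartition

variable {n : ℕ} (P : StackPartition n)

lemma cpm_entry_lower (lam : Params P) {r c : ℕ} (hc : c < n) (hlt : c < r) :
    cpmEntry P lam r c = if r = c + P.gfun c then 1 else 0 := by
  obtain ⟨j, hj, h1, h2⟩ := P.exists_block hc
  have he := P.S_succ hj
  have hm := P.m_pos ⟨j, hj⟩
  have hl := P.l_pos ⟨j, hj⟩
  have hmu := P.mE_lt hj
  have hme : P.m ⟨j, hj⟩ ≤ P.l ⟨j, hj⟩ * P.m ⟨j, hj⟩ := Nat.le_mul_of_pos_left _ hl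
  rw [P.gfun_block hj h1 h2]
  unfold cpmEntry
  have hsum1 : (∑ j' : Fin P.t,
      if P.S (j' : ℕ) ≤ r ∧ r < P.S ((j' : ℕ) + 1) ∧ P.S (j' : ℕ) ≤ c ∧ c < P.S ((j' : ℕ) + 1)
          ∧ (r - P.S (j' : ℕ)) % P.m j' = (c - P.S (j' : ℕ)) % P.m j' then
        genCompE (P.l j') (lam j') ((r - P.S (j' : ℕ)) / P.m j') ((c - P.S (j' : ℕ)) / P.m j')
      else 0)
      = if r = c + P.m ⟨j, hj⟩ ∧ c + P.m ⟨j, hj⟩ < P.S (j + 1) then (1 : ℂ) else 0 := by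
    rw [Finset.sum_eq_single_of_mem (⟨j, hj⟩ : Fin P.t) (Finset.mem_univ _)]
    · simp only [Fin.val_mk]
      by_cases hA : r = c + P.m ⟨j, hj⟩ ∧ c + P.m ⟨j, hj⟩ < P.S (j + 1)
      · have hcond : P.S j ≤ r ∧ r < P.S (j + 1) ∧ P.S j ≤ c ∧ c < P.S (j + 1)
            ∧ (r - P.S j) % P.m ⟨j, hj⟩ = (c - P.S j) % P.m ⟨j, hj⟩ := by
          obtain ⟨hA1, hA2⟩ := hA
          refine ⟨by omega, by omega, h1, h2, ?_⟩
          have hrs : r - P.S j = (c - P.S j) + P.m ⟨j, hj⟩ := by omega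
          rw [hrs, Nat.add_mod_right]
        rw [if_pos hA, if_pos hcond]
        have hrs : r - P.S j = (c - P.S j) + P.m ⟨j, hj⟩ := by omega
        rw [hrs, Nat.add_div_right _ hm]
        have hdiv1 : (c - P.S j) / P.m ⟨j, hj⟩ + 1 < P.l ⟨j, hj⟩ := by
          rw [← Nat.add_div_right _ hm, Nat.div_lt_iff_lt_mul hm]
          omega
        unfold genCompE
        rw [if_pos ⟨hdiv1, by omega⟩, if_pos rfl]
      · rw [if_neg hA]
        by_cases hcond : P.S j ≤ r ∧ r < P.S (j + 1) ∧ P.S j ≤ c ∧ c < P.S (j + 1)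
            ∧ (r - P.S j) % P.m ⟨j, hj⟩ = (c - P.S j) % P.m ⟨j, hj⟩
        · obtain ⟨hs1, hs2, _, _, hmod⟩ := hcond
          have hba : c - P.S j < r - P.S j := by omega
          have hal : r - P.S j < P.l ⟨j, hj⟩ * P.m ⟨j, hj⟩ := by omega
          have hbl : c - P.S j < P.l ⟨j, hj⟩ * P.m ⟨j, hj⟩ := by omega
          have hda := Nat.div_add_mod (r - P.S j) (P.m ⟨j, hj⟩)
          have hdb := Nat.div_add_mod (c - P.S j) (P.m ⟨j, hj⟩)
          have hax := (Nat.div_lt_iff_lt_mul hm).2 hal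
          have hbx := (Nat.div_lt_iff_lt_mul hm).2 hbl
          have hdd : (c - P.S j) / P.m ⟨j, hj⟩ < (r - P.S j) / P.m ⟨j, hj⟩ := by
            by_contra hcon
            push_neg at hcon
            have := Nat.mul_le_mul_left (P.m ⟨j, hj⟩) hcon
            omega
          have hne1 : (r - P.S j) / P.m ⟨j, hj⟩ ≠ (c - P.S j) / P.m ⟨j, hj⟩ + 1 := by
            intro hq
            rw [hq] at hda
            have hms : P.m ⟨j, hj⟩ * ((c - P.S j) / P.m ⟨j, hj⟩ + 1)
                = P.m ⟨j, hj⟩ * ((c - P.S j) / P.m ⟨j, hj⟩) + P.m ⟨j, hj⟩ :=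
              Nat.mul_succ _ _
            exact hA ⟨by omega, by omega⟩
          have hne2 : (c - P.S j) / P.m ⟨j, hj⟩ ≠ P.l ⟨j, hj⟩ - 1 := by
            intro hq
            omega
          rw [if_pos ⟨hs1, hs2, h1, h2, hmod⟩]
          unfold genCompE
          rw [if_pos ⟨hax, hbx⟩, if_neg hne1, if_neg hne2]
        · rw [if_neg hcond]
    · intro i _ hne
      refine if_neg fun hcond => hne (Fin.ext ?_)
      exact P.block_unique hcond.2.2.1 hcond.2.2.2.1 h1 h2
  have hsum2 : (∑ j' : Fin P.t,
      if P.S ((j' : ℕ) + 1) ≤ r ∧ r < P.S ((j' : ℕ) + 1) + P.mE ((j' : ℕ) + 1)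
          ∧ P.S ((j' : ℕ) + 1) - P.m j' ≤ c ∧ c < P.S ((j' : ℕ) + 1)
          ∧ c - (P.S ((j' : ℕ) + 1) - P.m j')
              = (P.m j' - P.mE ((j' : ℕ) + 1)) + (r - P.S ((j' : ℕ) + 1)) then
        (1 : ℂ)
      else 0)
      = if r = c + P.mE (j + 1) ∧ P.S (j + 1) ≤ c + P.mE (j + 1) then (1 : ℂ) else 0 := by
    rw [Finset.sum_eq_single_of_mem (⟨j, hj⟩ : Fin P.t) (Finset.mem_univ _)]
    · simp only [Fin.val_mk]
      refine if_congr ?_ rfl rfl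
      omega
    · intro i _ hne
      refine if_neg fun hcond => hne (Fin.ext ?_)
      have hei := P.S_succ i.isLt
      have hmi : P.m i ≤ P.l i * P.m i := Nat.le_mul_of_pos_left _ (P.l_pos i)
      have hSi : P.S (i : ℕ) ≤ c := by
        have h3 := hcond.2.2.1
        have : P.S ((i : ℕ) + 1) = P.S (i : ℕ) + P.l i * P.m i := by
          simpa using hei
        omega
      exact P.block_unique hSi hcond.2.2.2.1 h1 h2
  rw [hsum1, hsum2]
  split_ifs <;> first | (exfalso; omega) | norm_num

lemma gfun_add_lt {c : ℕ} (hc : c < n) : c + P.gfun c < n := by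
  obtain ⟨j, hj, h1, h2⟩ := P.exists_block hc
  have hle := P.S_le (j + 1)
  have hmule := P.S_succ_add_mE_le hj
  rw [P.gfun_block hj h1 h2]
  split_ifs <;> omega

lemma gfun_eq_of_cpm_eq {P' : StackPartition n} {lam : Params P} {lam' : Params P'}
    (h : cpm P lam = cpm P' lam') : ∀ c, c < n → P.gfun c = P'.gfun c := by
  intro c hc
  have key : ∀ r (h1 : c < r) (h2 : r < n),
      (if r = c + P.gfun c then (1 : ℂ) else 0)
        = if r = c + P'.gfun c then (1 : ℂ) else 0 := by
    intro r h1 h2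
    rw [← P.cpm_entry_lower lam hc h1, ← P'.cpm_entry_lower lam' hc h1]
    exact congrFun (congrFun h ⟨r, h2⟩) ⟨c, hc⟩
  rcases Nat.eq_zero_or_pos (P.gfun c) with h0 | hpos
  · rcases Nat.eq_zero_or_pos (P'.gfun c) with h0' | hpos'
    · rw [h0, h0']
    · have hr := key (c + P'.gfun c) (by omega) (P'.gfun_add_lt hc)
      rw [if_pos rfl, if_neg (by omega)] at hr
      norm_num at hr
  · have hr := key (c + P.gfun c) (by omega) (P.gfun_add_lt hc)
    rw [if_pos rfl] at hr
    by_contra hne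
    rw [if_neg (by omega)] at hr
    norm_num at hr

end StackPartition

end Aux2
section Aux3

namespace StackPartition

variable {n : ℕ}

lemma gfun_at_start (P : StackPartition n) {j : ℕ} (hj : j < P.t) :
    P.gfun (P.S j) = if 2 ≤ P.l ⟨j, hj⟩ then P.m ⟨j, hj⟩ else 0 := by
  have hse := P.S_lt_succ hj
  have he := P.S_succ hj
  have hm := P.m_pos ⟨j, hj⟩
  have hmu := P.mE_lt hj
  rw [P.gfun_block hj le_rfl hse]
  by_cases h2 : 2 ≤ P.l ⟨j, hj⟩
  · rw [if_pos h2, if_pos]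
    have := Nat.mul_le_mul_right (P.m ⟨j, hj⟩) h2
    omega
  · have hl1 : P.l ⟨j, hj⟩ = 1 := by have := P.l_pos ⟨j, hj⟩; omega
    rw [hl1, one_mul] at he
    rw [if_neg h2, if_neg (by omega), if_neg (by omega)]

lemma gfun_in_one_block (P : StackPartition n) {j : ℕ} (hj : j < P.t)
    (hl1 : P.l ⟨j, hj⟩ = 1) {c : ℕ} (h1 : P.S j ≤ c) (h2 : c < P.S (j + 1)) :
    P.gfun c = if P.S (j + 1) ≤ c + P.mE (j + 1) then P.mE (j + 1) else 0 := by
  have he := P.S_succ hj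
  rw [hl1, one_mul] at he
  rw [P.gfun_block hj h1 h2, if_neg (by omega)]

/-- Auxiliary: the start of block `j` distinguishes `l j = 1` from `l j ≥ 2`. -/
lemma aux12 (P P' : StackPartition n) {j : ℕ}
    (H : ∀ c, c < n → P.gfun c = P'.gfun c)
    (hj : j < P.t) (hj' : j < P'.t) (hS : P.S j = P'.S j)
    (hl1 : P.l ⟨j, hj⟩ = 1) (hl2 : 2 ≤ P'.l ⟨j, hj'⟩) : False := by
  have h0 := P.gfun_at_start hj
  have h0' := P'.gfun_at_start hj'
  rw [← hS] at h0'
  have hH := H (P.S j) (P.S_lt_n hj)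
  rw [h0, h0', if_neg (by omega), if_pos hl2] at hH
  have := P'.m_pos ⟨j, hj'⟩
  omega

/-- Auxiliary: if both stacks have length ≥ 2 (hence equal values), the
lengths agree. -/
lemma aux22 (P P' : StackPartition n) {j : ℕ}
    (H : ∀ c, c < n → P.gfun c = P'.gfun c)
    (hj : j < P.t) (hj' : j < P'.t) (hS : P.S j = P'.S j)
    (hl2 : 2 ≤ P.l ⟨j, hj⟩) (hl2' : 2 ≤ P'.l ⟨j, hj'⟩)
    (hmm : P.m ⟨j, hj⟩ = P'.m ⟨j, hj'⟩)
    (hll : P.l ⟨j, hj⟩ < P'.l ⟨j, hj'⟩) : False := by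
  have he := P.S_succ hj
  have he' := P'.S_succ hj'
  have hm := P.m_pos ⟨j, hj⟩
  have hmu := P.mE_lt hj
  set c := P.S j + (P.l ⟨j, hj⟩ - 1) * P.m ⟨j, hj⟩ with hcdef
  have hmul1 : (P.l ⟨j, hj⟩ - 1) * P.m ⟨j, hj⟩ + P.m ⟨j, hj⟩ = P.l ⟨j, hj⟩ * P.m ⟨j, hj⟩ := by
    have h' : P.l ⟨j, hj⟩ - 1 + 1 = P.l ⟨j, hj⟩ := by omega
    calc (P.l ⟨j, hj⟩ - 1) * P.m ⟨j, hj⟩ + P.m ⟨j, hj⟩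
        = (P.l ⟨j, hj⟩ - 1 + 1) * P.m ⟨j, hj⟩ := by rw [Nat.succ_mul]
      _ = P.l ⟨j, hj⟩ * P.m ⟨j, hj⟩ := by rw [h']
  have hmul2 : P.l ⟨j, hj⟩ * P.m ⟨j, hj⟩ + P.m ⟨j, hj⟩ ≤ P'.l ⟨j, hj'⟩ * P.m ⟨j, hj⟩ := by
    have h' := Nat.mul_le_mul_right (P.m ⟨j, hj⟩) (show P.l ⟨j, hj⟩ + 1 ≤ P'.l ⟨j, hj'⟩ by omega)
    calc P.l ⟨j, hj⟩ * P.m ⟨j, hj⟩ + P.m ⟨j, hj⟩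
        = (P.l ⟨j, hj⟩ + 1) * P.m ⟨j, hj⟩ := by rw [Nat.succ_mul]
      _ ≤ P'.l ⟨j, hj'⟩ * P.m ⟨j, hj⟩ := h'
  rw [← hmm] at he'
  have hce : c + P.m ⟨j, hj⟩ = P.S (j + 1) := by omega
  have hc2 : c < P.S (j + 1) := by omega
  have hcn : c < n := lt_of_lt_of_le hc2 (P.S_le _)
  have hv : P.gfun c = 0 := by
    rw [P.gfun_block hj (by omega) hc2, if_neg (by omega), if_neg (by omega)]
  have hv' : P'.gfun c = P.m ⟨j, hj⟩ := by
    have hc2' : c < P'.S (j + 1) := by omega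
    rw [P'.gfun_block hj' (by omega) hc2', ← hmm, if_pos (by omega)]
  have := H c hcn
  omega

/-- Auxiliary: both stacks length 1, `P`'s block is followed by a further
stack but `P'`'s is not. -/
lemma aux_mu0 (P P' : StackPartition n) {j : ℕ}
    (H : ∀ c, c < n → P.gfun c = P'.gfun c)
    (hj : j < P.t) (hj' : j < P'.t) (hS : P.S j = P'.S j)
    (hl1 : P.l ⟨j, hj⟩ = 1) (hl1' : P'.l ⟨j, hj'⟩ = 1)
    (hmu : 0 < P.mE (j + 1)) (hmu' : P'.mE (j + 1) = 0) : False := by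
  have he := P.S_succ hj
  rw [hl1, one_mul] at he
  have hmlt := P.mE_lt hj
  have hm := P.m_pos ⟨j, hj⟩
  set c := P.S (j + 1) - P.mE (j + 1) with hcdef
  have h1 : P.S j ≤ c := by omega
  have hc2 : c < P.S (j + 1) := by omega
  have hcn : c < n := lt_of_lt_of_le hc2 (P.S_le _)
  have hv : P.gfun c = P.mE (j + 1) := by
    rw [P.gfun_in_one_block hj hl1 h1 hc2, if_pos (by omega)]
  have he'n : P'.S (j + 1) = n := by
    have : ¬ (j + 1 < P'.t) := by
      rw [← P'.mE_pos_iff (j + 1)]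
      omega
    exact P'.S_of_le (by omega)
  have hv' : P'.gfun c = 0 := by
    rw [P'.gfun_in_one_block hj' hl1' (by omega) (by omega), hmu']
    split_ifs <;> rfl
  have := H c hcn
  omega

/-- Auxiliary: both stacks length 1, both followed by further stacks, but the
first subdiagonal hit of `P` comes strictly earlier. -/
lemma aux_d (P P' : StackPartition n) {j : ℕ}
    (H : ∀ c, c < n → P.gfun c = P'.gfun c)
    (hj : j < P.t) (hj' : j < P'.t) (hS : P.S j = P'.S j)
    (hl1 : P.l ⟨j, hj⟩ = 1) (hl1' : P'.l ⟨j, hj'⟩ = 1)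
    (hmu : 0 < P.mE (j + 1)) (hmu' : 0 < P'.mE (j + 1))
    (hd : P.S (j + 1) - P.mE (j + 1) < P'.S (j + 1) - P'.mE (j + 1)) : False := by
  have he := P.S_succ hj
  rw [hl1, one_mul] at he
  have he' := P'.S_succ hj'
  rw [hl1', one_mul] at he'
  have hmlt := P.mE_lt hj
  have hmlt' := P'.mE_lt hj'
  have hm := P.m_pos ⟨j, hj⟩
  have hm' := P'.m_pos ⟨j, hj'⟩
  set c := P.S (j + 1) - P.mE (j + 1) with hcdef
  have h1 : P.S j ≤ c := by omega
  have hc2 : c < P.S (j + 1) := by omega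
  have hcn : c < n := lt_of_lt_of_le hc2 (P.S_le _)
  have hv : P.gfun c = P.mE (j + 1) := by
    rw [P.gfun_in_one_block hj hl1 h1 hc2, if_pos (by omega)]
  have hv' : P'.gfun c = 0 := by
    rw [P'.gfun_in_one_block hj' hl1' (by omega) (by omega), if_neg (by omega)]
  have := H c hcn
  omega

/-- The step: matching blocks have equal value and length. -/
lemma step (P P' : StackPartition n)
    (H : ∀ c, c < n → P.gfun c = P'.gfun c) {j : ℕ}
    (hj : j < P.t) (hj' : j < P'.t) (hS : P.S j = P'.S j) :
    P.m ⟨j, hj⟩ = P'.m ⟨j, hj'⟩ ∧ P.l ⟨j, hj⟩ = P'.l ⟨j, hj'⟩ := by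
  have H' : ∀ c, c < n → P'.gfun c = P.gfun c := fun c hc => (H c hc).symm
  have hlp := P.l_pos ⟨j, hj⟩
  have hlp' := P'.l_pos ⟨j, hj'⟩
  by_cases hl2 : 2 ≤ P.l ⟨j, hj⟩
  · by_cases hl2' : 2 ≤ P'.l ⟨j, hj'⟩
    · have hmm : P.m ⟨j, hj⟩ = P'.m ⟨j, hj'⟩ := by
        have h0 := P.gfun_at_start hj
        have h0' := P'.gfun_at_start hj'
        rw [← hS] at h0'
        have hH := H (P.S j) (P.S_lt_n hj)
        rw [h0, h0', if_pos hl2, if_pos hl2'] at hH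
        exact hH
      refine ⟨hmm, ?_⟩
      rcases lt_trichotomy (P.l ⟨j, hj⟩) (P'.l ⟨j, hj'⟩) with h | h | h
      · exact absurd (aux22 P P' H hj hj' hS hl2 hl2' hmm h) (by simp)
      · exact h
      · exact absurd (aux22 P' P H' hj' hj hS.symm hl2' hl2 hmm.symm h) (by simp)
    · exact absurd (aux12 P' P H' hj' hj hS.symm (by omega) hl2) (by simp)
  · by_cases hl2' : 2 ≤ P'.l ⟨j, hj'⟩
    · exact absurd (aux12 P P' H hj hj' hS (by omega) hl2') (by simp)
    · have hl1 : P.l ⟨j, hj⟩ = 1 := by omega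
      have hl1' : P'.l ⟨j, hj'⟩ = 1 := by omega
      refine ⟨?_, by omega⟩
      have he := P.S_succ hj
      rw [hl1, one_mul] at he
      have he' := P'.S_succ hj'
      rw [hl1', one_mul] at he'
      have hmlt := P.mE_lt hj
      have hmlt' := P'.mE_lt hj'
      rcases Nat.eq_zero_or_pos (P.mE (j + 1)) with h0 | hpos
      · rcases Nat.eq_zero_or_pos (P'.mE (j + 1)) with h0' | hpos'
        · have ht : P.S (j + 1) = n := by
            have : ¬ (j + 1 < P.t) := by rw [← P.mE_pos_iff (j + 1)]; omega
            exact P.S_of_le (by omega)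
          have ht' : P'.S (j + 1) = n := by
            have : ¬ (j + 1 < P'.t) := by rw [← P'.mE_pos_iff (j + 1)]; omega
            exact P'.S_of_le (by omega)
          omega
        · exact absurd (aux_mu0 P' P H' hj' hj hS.symm hl1' hl1 hpos' h0) (by simp)
      · rcases Nat.eq_zero_or_pos (P'.mE (j + 1)) with h0' | hpos'
        · exact absurd (aux_mu0 P P' H hj hj' hS hl1 hl1' hpos h0') (by simp)
        · rcases lt_trichotomy (P.S (j + 1) - P.mE (j + 1)) (P'.S (j + 1) - P'.mE (j + 1))
            with h | h | h
          · exact absurd (aux_d P P' H hj hj' hS hl1 hl1' hpos hpos' h) (by simp)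
          · -- equal first-hit positions: equal mE, hence equal m
            set c := P.S (j + 1) - P.mE (j + 1) with hcdef
            have h1 : P.S j ≤ c := by omega
            have hc2 : c < P.S (j + 1) := by omega
            have hcn : c < n := lt_of_lt_of_le hc2 (P.S_le _)
            have hv : P.gfun c = P.mE (j + 1) := by
              rw [P.gfun_in_one_block hj hl1 h1 hc2, if_pos (by omega)]
            have hv' : P'.gfun c = P'.mE (j + 1) := by
              rw [P'.gfun_in_one_block hj' hl1' (by omega) (by omega), if_pos (by omega)]
            have := H c hcn
            omega
          · exact absurd (aux_d P' P H' hj' hj hS.symm hl1' hl1 hpos' hpos h) (by simp)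

lemma S_all (P P' : StackPartition n)
    (H : ∀ c, c < n → P.gfun c = P'.gfun c) : ∀ j, P.S j = P'.S j := by
  intro j
  induction j with
  | zero => rw [P.S_zero, P'.S_zero]
  | succ k ih =>
    by_cases hk : k < P.t
    · have hk' : k < P'.t := by
        apply P'.lt_t_of_S_lt
        rw [← ih]
        exact P.S_lt_n hk
      obtain ⟨hm, hl⟩ := step P P' H hk hk' ih
      rw [P.S_succ hk, P'.S_succ hk', ih, hm, hl]
    · have hk2 : P.S k = n := P.S_of_le (by omega)
      have hk' : ¬ k < P'.t := by
        intro hcon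
        have := P'.S_lt_n hcon
        omega
      rw [P.S_of_le (by omega), P'.S_of_le (by omega)]

lemma t_eq (P P' : StackPartition n)
    (H : ∀ c, c < n → P.gfun c = P'.gfun c) : P.t = P'.t := by
  have hS := S_all P P' H
  by_contra hne
  rcases Nat.lt_or_ge P.t P'.t with h | h
  · have h1 : P.S P.t = n := P.S_of_le le_rfl
    have h2 : P'.S P.t < n := P'.S_lt_n h
    rw [hS P.t] at h1
    omega
  · have h' : P'.t < P.t := by omega
    have h1 : P'.S P'.t = n := P'.S_of_le le_rfl
    have h2 : P.S P'.t < n := P.S_lt_n h'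
    rw [← hS P'.t] at h1
    omega

/-- `l` extended by `0` beyond the number of stacks. -/
def lE (P : StackPartition n) (j : ℕ) : ℕ := if h : j < P.t then P.l ⟨j, h⟩ else 0

lemma parts_eq_range (P : StackPartition n) :
    P.parts = ∑ j ∈ Finset.range P.t, Multiset.replicate (P.lE j) (P.mE j) := by
  rw [parts, ← Fin.sum_univ_eq_sum_range (fun j => Multiset.replicate (P.lE j) (P.mE j)) P.t]
  refine Finset.sum_congr rfl fun i _ => ?_
  rw [lE, mE, dif_pos i.isLt, dif_pos i.isLt]

lemma parts_eq_of_gfun_eq (P P' : StackPartition n)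
    (H : ∀ c, c < n → P.gfun c = P'.gfun c) : P.parts = P'.parts := by
  have hS := S_all P P' H
  have ht := t_eq P P' H
  rw [parts_eq_range, parts_eq_range, ht]
  refine Finset.sum_congr rfl fun k hk => ?_
  rw [Finset.mem_range] at hk
  have hk' : k < P.t := by omega
  obtain ⟨hm, hl⟩ := step P P' H hk' hk (hS k)
  rw [lE, lE, mE, mE, dif_pos hk', dif_pos hk, dif_pos hk', dif_pos hk, hm, hl]

end StackPartition

end Aux3
/-- If `π` and `π'` are distinct partitions of `n`, then
`𝒫_π ∩ 𝒫_{π'} = ∅`. -/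
theorem statement1 (n : ℕ) (hn : 2 ≤ n) (P P' : StackPartition n)
    (hne : P.parts ≠ P'.parts) :
    planeSet P ∩ planeSet P' = ∅ := by
  rw [Set.eq_empty_iff_forall_notMem]
  rintro A ⟨⟨lam, h1⟩, ⟨lam', h2⟩⟩
  apply hne
  have hco : cpm P lam = cpm P' lam' := by rw [← h1, ← h2]
  exact StackPartition.parts_eq_of_gfun_eq P P' (P.gfun_eq_of_cpm_eq hco)
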